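/- For t ≥ 2, the number of generalized S-Motzkin paths with (t−2)n H steps and n each of U and D steps equals (1/((t−1)n+1)) * binomial(tn, n), the number of t-ary trees with n nodes. -/

import Mathlib

/-!
Write `e = t - 2`. Deleting the `D`s of a generalized S-Motzkin path leaves the skeleton
`(H^e U)^n`, so the path is determined by its `D`-positions, i.e. by the word `b` that records
`D` as `true` and `H`, `U` as `false`; the conditions on the path say exactly that every prefix
of `b` has at least `e + 1` letters `false` per letter `true`. Reversing such a ballot word and
appending `false` gives the preorder (Łukasiewicz) code of a `t`-ary tree with `n` nodes. By the
cycle lemma, every word of length `t n + 1` with `n` letters `true` is a rotation of exactly one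
Łukasiewicz word, by exactly one amount `< t n + 1`; hence there are
`binomial (t n + 1, n) / (t n + 1) = binomial (t n, n) / ((t - 1) n + 1)` of them.
-/

/-- The three step types of a Motzkin path: H = (1,0), U = (1,1), D = (1,-1). -/
inductive Step : Type | H | U | D
deriving DecidableEq, Repr

/-- A t-ary tree: either empty or a node with t ordered t-ary subtrees. -/
inductive TAry (t : ℕ) : Type
  | leaf : TAry t
  | node : (Fin t → TAry t) → TAry t

/-- The number of nodes of a t-ary tree. -/
def TAry.size {t : ℕ} : TAry t → ℕ
  | .leaf => 0
  | .node f => 1 + ∑ i : Fin t, (f i).size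

/-- A generalized S-Motzkin path: (t-2)n H steps, n U steps and n D steps, forming a
Motzkin path whose first t-2 steps are H, with exactly t-2 H steps between any two
consecutive U steps, and whose k-th D step occurs only after at least k(t-2) H steps
and k U steps. -/
def GenSMotzkin (t n : ℕ) (w : List Step) : Prop :=
  w.count Step.H = (t - 2) * n ∧ w.count Step.U = n ∧ w.count Step.D = n ∧
  (∀ p : List Step, p <+: w → p.count Step.D ≤ p.count Step.U) ∧
  (w ≠ [] → w.take (t - 2) = List.replicate (t - 2) Step.H) ∧
  (∀ p mid s : List Step, w = p ++ Step.U :: mid ++ Step.U :: s →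
    Step.U ∉ mid → mid.count Step.H = t - 2) ∧
  (∀ p s : List Step, w = p ++ Step.D :: s →
    (p.count Step.D + 1) * (t - 2) ≤ p.count Step.H ∧
      p.count Step.D + 1 ≤ p.count Step.U)

namespace SMotzkin

def ProperPrefixSumsNonneg (l : List ℤ) : Prop := ∀ k < l.length, 0 ≤ (l.take k).sum

theorem sum_take_rotate {l : List ℤ} {k j : ℕ} (hk : k ≤ l.length) (hj : j ≤ l.length) :
    ((l.rotate k).take j).sum =
      ((l.drop k).take j).sum + (l.take (j - (l.length - k))).sum := by
  rw [List.rotate_eq_drop_append_take hk, List.take_append, List.sum_append, List.length_drop,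
    List.take_take, Nat.min_eq_left (by omega)]

theorem eq_zero_of_properPrefixSumsNonneg_rotate {l : List ℤ} (hl : l.sum = -1)
    (h₀ : ProperPrefixSumsNonneg l) {k : ℕ} (hk : k < l.length)
    (hrot : ProperPrefixSumsNonneg (l.rotate k)) : k = 0 := by
  by_contra hk₀
  have hdrop := hrot (l.length - k) (by simp; omega)
  rw [sum_take_rotate hk.le (by omega), List.take_of_length_le (by simp), Nat.sub_self,
    List.take_zero, List.sum_nil, add_zero] at hdrop
  have := h₀ k hk
  have := List.sum_take_add_sum_drop l k
  omega

/-- The cycle lemma: rotate `l` so that it starts where its prefix sums first reach their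
minimum. -/
theorem exists_properPrefixSumsNonneg_rotate {l : List ℤ} (hl : l.sum = -1) :
    ∃ k < l.length, ProperPrefixSumsNonneg (l.rotate k) := by
  set S : ℕ → ℤ := fun i => (l.take i).sum
  have hpos : 0 < l.length := List.length_pos_iff.2 (by rintro rfl; simp at hl)
  obtain ⟨i₀, hi₀, hmin⟩ := (Finset.range l.length).exists_min_image S ⟨0, by simpa⟩
  have hex : ∃ k, k < l.length ∧ ∀ i < l.length, S k ≤ S i :=
    ⟨i₀, by simpa using hi₀, fun i hi => hmin i (by simpa using hi)⟩
  obtain ⟨hk, hkmin⟩ := Nat.find_spec hex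
  have hfirst : ∀ i < Nat.find hex, S (Nat.find hex) < S i := by
    intro i hi
    obtain ⟨i', hi', hlt⟩ : ∃ i' < l.length, S i' < S i := by
      simpa [hi.trans hk] using Nat.find_min hex hi
    exact (hkmin i' hi').trans_lt hlt
  set k := Nat.find hex
  refine ⟨k, hk, fun j hj => ?_⟩
  rw [List.length_rotate] at hj
  have hsplit : S (k + j) = S k + ((l.drop k).take j).sum := by
    simp only [S, List.take_add, List.sum_append]
  rw [sum_take_rotate hk.le hj.le]
  rcases lt_or_ge (k + j) l.length with hkj | hkj
  · rw [Nat.sub_eq_zero_of_le (by omega), List.take_zero, List.sum_nil]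
    linarith [hkmin (k + j) hkj]
  · -- wrapping around: the suffix from `k` (sum `-1 - S k`), then a prefix shorter than `k`
    have hS : S (k + j) = -1 := by simp only [S, List.take_of_length_le hkj, hl]
    have := hfirst (j - (l.length - k)) (by omega)
    simp only [S] at *
    linarith

theorem ncard_bool_lists_eq_choose (N n : ℕ) :
    {w : List Bool | w.length = N ∧ w.count true = n}.ncard = N.choose n := by
  induction N generalizing n with
  | zero =>
    have hnil :
        {w : List Bool | w.length = 0 ∧ w.count true = n} = if n = 0 then {[]} else ∅ := by
      ext w
      split_ifs <;> simp only [List.length_eq_zero_iff] <;> aesop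
    rw [hnil]
    cases n <;> simp
  | succ N ih =>
    have hfin (p : ℕ → Prop) : {w : List Bool | w.length = N ∧ p (w.count true)}.Finite :=
      (List.finite_length_eq Bool N).subset fun w hw => hw.1
    have hsplit : {w : List Bool | w.length = N + 1 ∧ w.count true = n} =
        List.cons false '' {w | w.length = N ∧ w.count true = n} ∪
          List.cons true '' {w | w.length = N ∧ w.count true + 1 = n} := by
      ext (_ | ⟨_ | _, w⟩) <;> simp
    have hdisj : Disjoint (List.cons false '' {w | w.length = N ∧ w.count true = n})
        (List.cons true '' {w | w.length = N ∧ w.count true + 1 = n}) := by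
      rw [Set.disjoint_left]
      rintro _ ⟨_, -, rfl⟩ ⟨_, -, h⟩
      cases h
    rw [hsplit, Set.ncard_union_eq hdisj ((hfin (· = n)).image _) ((hfin (· + 1 = n)).image _),
      Set.ncard_image_of_injective _ List.cons_injective,
      Set.ncard_image_of_injective _ List.cons_injective, ih]
    cases n with
    | zero => simp
    | succ n => simp [ih, Nat.choose_succ_succ', add_comm]

section Lukasiewicz

variable (m : ℕ)

/-- A letter `true` is a node with `m + 1` children, a letter `false` a leaf. -/
def stepWeight (b : Bool) : ℤ := if b then m else -1

def weight (w : List Bool) : ℤ := (w.map (stepWeight m)).sum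

@[simp] theorem stepWeight_true : stepWeight m true = m := rfl

@[simp] theorem stepWeight_false : stepWeight m false = -1 := rfl

@[simp] theorem weight_nil : weight m [] = 0 := rfl

@[simp] theorem weight_cons (b : Bool) (w : List Bool) :
    weight m (b :: w) = stepWeight m b + weight m w := rfl

theorem weight_append (v w : List Bool) : weight m (v ++ w) = weight m v + weight m w := by
  simp [weight]

theorem weight_reverse (w : List Bool) : weight m w.reverse = weight m w := by
  simp [weight, List.map_reverse, List.sum_reverse]

theorem weight_rotate (w : List Bool) (k : ℕ) : weight m (w.rotate k) = weight m w := by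
  rw [weight, List.map_rotate, ((w.map _).rotate_perm k).sum_eq, weight]

theorem weight_eq_count (w : List Bool) : weight m w = m * w.count true - w.count false := by
  induction w with
  | nil => simp
  | cons b w ih => cases b <;> simp [ih] <;> ring

theorem weight_eq_neg_one_iff {n : ℕ} {w : List Bool} (hcount : w.count true = n) :
    weight m w = -1 ↔ w.length = (m + 1) * n + 1 := by
  rw [weight_eq_count, ← w.count_true_add_count_false, hcount]
  constructor <;> intro h
  · zify
    linarith
  · zify at h
    linarith

/-- `j` is an integer so that `isLukasiewicz_cons` holds without a case split. -/
def IsLukasiewicz (j : ℤ) (a : List Bool) : Prop :=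
  weight m a = -j ∧ ∀ k < a.length, -j < weight m (a.take k)

theorem isLukasiewicz_nil (j : ℤ) : IsLukasiewicz m j [] ↔ j = 0 := by
  simp [IsLukasiewicz, eq_comm]

theorem isLukasiewicz_cons (j : ℤ) (b : Bool) (q : List Bool) :
    IsLukasiewicz m j (b :: q) ↔ 0 < j ∧ IsLukasiewicz m (j + stepWeight m b) q := by
  simp only [IsLukasiewicz, List.length_cons, Nat.forall_lt_succ_left, List.take_zero,
    List.take_succ_cons, weight_cons, weight_nil]
  constructor
  · rintro ⟨hsum, hpos, hprefix⟩
    exact ⟨by linarith, by linarith, fun k hk => by linarith [hprefix k hk]⟩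
  · rintro ⟨hpos, hsum, hprefix⟩
    exact ⟨by linarith, by linarith, fun k hk => by linarith [hprefix k hk]⟩

theorem isLukasiewicz_one_iff (a : List Bool) :
    IsLukasiewicz m 1 a ↔
      weight m a = -1 ∧ ProperPrefixSumsNonneg (a.map (stepWeight m)) := by
  simp only [IsLukasiewicz, ProperPrefixSumsNonneg, weight, List.length_map, ← List.map_take]
  simp [Int.lt_iff_add_one_le]

theorem exists_isLukasiewicz_rotate {w : List Bool} (hw : weight m w = -1) :
    ∃ k < w.length, IsLukasiewicz m 1 (w.rotate k) := by
  obtain ⟨k, hk, hrot⟩ := exists_properPrefixSumsNonneg_rotate hw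
  rw [← List.map_rotate] at hrot
  exact ⟨k, by simpa using hk,
    (isLukasiewicz_one_iff m _).2 ⟨by rw [weight_rotate, hw], hrot⟩⟩

theorem eq_zero_of_isLukasiewicz_rotate {a : List Bool} (ha : IsLukasiewicz m 1 a) {k : ℕ}
    (hk : k < a.length) (hrot : IsLukasiewicz m 1 (a.rotate k)) : k = 0 := by
  rw [isLukasiewicz_one_iff, List.map_rotate] at hrot
  rw [isLukasiewicz_one_iff] at ha
  exact eq_zero_of_properPrefixSumsNonneg_rotate ha.1 ha.2 (by simpa using hk) hrot.2

/-- Every word of length `(m + 1) n + 1` with `n` letters `true` is, in exactly one way, a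
rotation of a Łukasiewicz word by less than its length. -/
theorem card_isLukasiewicz_mul_length (n : ℕ) :
    Nat.card {a : List Bool // a.count true = n ∧ IsLukasiewicz m 1 a} * ((m + 1) * n + 1) =
      ((m + 1) * n + 1).choose n := by
  set N := (m + 1) * n + 1
  have hlen {a : List Bool} (ha : a.count true = n ∧ IsLukasiewicz m 1 a) : a.length = N :=
    (weight_eq_neg_one_iff m ha.1).1 ha.2.1
  let f : {a : List Bool // a.count true = n ∧ IsLukasiewicz m 1 a} × Fin N →
      {w : List Bool | w.length = N ∧ w.count true = n} := fun p =>
    ⟨p.1.1.rotate p.2, by simp [(List.rotate_perm _ _).count_eq, hlen p.1.2, p.1.2.1]⟩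
  have hinj : Function.Injective f := by
    rintro ⟨⟨a, ha⟩, k⟩ ⟨⟨a', ha'⟩, k'⟩ h
    simp only [f, Subtype.mk.injEq] at h
    wlog hkk : k ≤ k' generalizing a a' k k'
    · exact (this k' a' ha' k a ha h.symm (by omega)).symm
    rw [← Nat.sub_add_cancel hkk, ← List.rotate_rotate, List.rotate_eq_rotate] at h
    have hk₀ := eq_zero_of_isLukasiewicz_rotate m ha'.2 (by rw [hlen ha']; omega) (h ▸ ha.2)
    obtain rfl : k = k' := Fin.ext (by omega)
    simp_all
  have hsurj : Function.Surjective f := by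
    rintro ⟨w, hw, hcount⟩
    obtain ⟨k, hk, hrot⟩ :=
      exists_isLukasiewicz_rotate m ((weight_eq_neg_one_iff m hcount).2 hw)
    refine ⟨(⟨w.rotate k, by rw [(w.rotate_perm k).count_eq, hcount], hrot⟩,
      ⟨(N - k) % N, Nat.mod_lt _ (by omega)⟩), ?_⟩
    simp only [f, Subtype.mk.injEq]
    rw [← hw, ← List.length_rotate w k, List.rotate_mod, List.rotate_rotate, List.length_rotate,
      Nat.add_sub_cancel' hk.le, List.rotate_length]
  rw [← ncard_bool_lists_eq_choose, ← Nat.card_coe_set_eq,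
    ← Nat.card_eq_of_bijective f ⟨hinj, hsurj⟩, Nat.card_prod, Nat.card_fin]

theorem card_isLukasiewicz_mul (n : ℕ) :
    Nat.card {a : List Bool // a.count true = n ∧ IsLukasiewicz m 1 a} * (m * n + 1) =
      ((m + 1) * n).choose n := by
  have h := Nat.choose_mul_succ_eq ((m + 1) * n) n
  rw [← card_isLukasiewicz_mul_length,
    show (m + 1) * n + 1 - n = m * n + 1 by ring_nf; omega] at h
  exact Nat.eq_of_mul_eq_mul_right (by omega : 0 < (m + 1) * n + 1) (by rw [h]; ring)

end Lukasiewicz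

section Trees

def code {t : ℕ} : TAry t → List Bool
  | .leaf => [false]
  | .node f => true :: (List.ofFn fun i => code (f i)).flatten

def forestCode {t : ℕ} (ts : List (TAry t)) : List Bool := (ts.map code).flatten

variable {t : ℕ}

@[simp] theorem forestCode_nil : forestCode ([] : List (TAry t)) = [] := rfl

@[simp] theorem forestCode_leaf_cons (ts : List (TAry t)) :
    forestCode (.leaf :: ts) = false :: forestCode ts := rfl

@[simp] theorem forestCode_node_cons (f : Fin t → TAry t) (ts : List (TAry t)) :
    forestCode (.node f :: ts) = true :: forestCode (List.ofFn f ++ ts) := by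
  simp [forestCode, code, List.map_ofFn, Function.comp_def]

theorem forestCode_singleton (T : TAry t) : forestCode [T] = code T := by
  simp [forestCode]

theorem forestCode_eq_nil_iff {ts : List (TAry t)} : forestCode ts = [] ↔ ts = [] := by
  rcases ts with _ | ⟨_ | _, _⟩ <;> simp

theorem count_true_code (T : TAry t) : (code T).count true = T.size := by
  induction T with
  | leaf => rfl
  | node f ih => simp [code, TAry.size, List.count_flatten, List.sum_ofFn, ih, add_comm]

theorem forestCode_append_inj : ∀ {ts ts' : List (TAry t)} {r r' : List Bool},
    ts.length = ts'.length → forestCode ts ++ r = forestCode ts' ++ r' → ts = ts' ∧ r = r'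
  | [], [], _, _, _, h => ⟨rfl, by simpa using h⟩
  | .leaf :: ts, .leaf :: ts', _, _, hlen, h => by
    simp only [forestCode_leaf_cons, List.cons_append, List.cons.injEq, true_and] at h
    obtain ⟨rfl, rfl⟩ := forestCode_append_inj (by simpa using hlen) h
    exact ⟨rfl, rfl⟩
  | .node f :: ts, .node f' :: ts', _, _, hlen, h => by
    simp only [forestCode_node_cons, List.cons_append, List.cons.injEq, true_and] at h
    obtain ⟨hts, rfl⟩ := forestCode_append_inj (by simpa using hlen) h
    obtain ⟨hf, rfl⟩ := List.append_inj hts (by simp)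
    exact ⟨by rw [List.ofFn_inj.1 hf], rfl⟩
  | .leaf :: _, .node _ :: _, _, _, _, h => by simp at h
  | .node _ :: _, .leaf :: _, _, _, _, h => by simp at h
termination_by ts => (forestCode ts).length
decreasing_by all_goals simp

theorem code_injective : Function.Injective (code : TAry t → List Bool) := by
  intro T T' h
  have := forestCode_append_inj (ts := [T]) (ts' := [T']) (r := []) (r' := []) rfl
    (by simpa [forestCode_singleton] using h)
  simpa using this.1

theorem exists_forestCode_nil (j : ℤ) :
    (∃ ts : List (TAry t), (ts.length : ℤ) = j ∧ forestCode ts = []) ↔ j = 0 := by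
  constructor
  · rintro ⟨ts, rfl, h⟩
    simp [forestCode_eq_nil_iff.1 h]
  · rintro rfl
    exact ⟨[], rfl, rfl⟩

theorem ofFn_getElem_eq_take {α : Type*} {k : ℕ} (l : List α) (hk : k ≤ l.length) :
    List.ofFn (fun i : Fin k => l[i]) = l.take k :=
  List.ext_getElem (by simp [hk]) (by simp)

theorem exists_forestCode_cons (m : ℕ) (j : ℤ) (b : Bool) (q : List Bool) :
    (∃ ts : List (TAry (m + 1)), (ts.length : ℤ) = j ∧ forestCode ts = b :: q) ↔
      0 < j ∧ ∃ ts : List (TAry (m + 1)), (ts.length : ℤ) = j + stepWeight m b ∧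
        forestCode ts = q := by
  constructor
  · rintro ⟨_ | ⟨_ | f, ts⟩, rfl, h⟩ <;> simp only [forestCode_nil, forestCode_leaf_cons,
      forestCode_node_cons, List.cons.injEq, reduceCtorEq] at h <;> obtain ⟨rfl, rfl⟩ := h
    · exact ⟨by simp, ts, by simp, rfl⟩
    · exact ⟨by simp, List.ofFn f ++ ts, by simp; ring, rfl⟩
  · rintro ⟨hj, ts, hlen, rfl⟩
    cases b <;> simp only [stepWeight_false, stepWeight_true] at hlen
    · exact ⟨.leaf :: ts, by simp [hlen], rfl⟩
    · have hm : m + 1 ≤ ts.length := by omega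
      refine ⟨.node (fun i => ts[i]) :: ts.drop (m + 1), by simp; omega, ?_⟩
      rw [forestCode_node_cons, ofFn_getElem_eq_take ts hm, List.take_append_drop]

theorem isLukasiewicz_iff_exists_forestCode (m : ℕ) (j : ℤ) (a : List Bool) :
    IsLukasiewicz m j a ↔
      ∃ ts : List (TAry (m + 1)), (ts.length : ℤ) = j ∧ forestCode ts = a := by
  induction a generalizing j with
  | nil => rw [isLukasiewicz_nil, exists_forestCode_nil]
  | cons b q ih => rw [isLukasiewicz_cons, exists_forestCode_cons, ih]

theorem card_tree_eq_card_isLukasiewicz (m n : ℕ) :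
    Nat.card {T : TAry (m + 1) // T.size = n} =
      Nat.card {a : List Bool // a.count true = n ∧ IsLukasiewicz m 1 a} := by
  refine Nat.card_eq_of_bijective (fun T => ⟨code T.1, by rw [count_true_code, T.2],
    (isLukasiewicz_iff_exists_forestCode m 1 _).2 ⟨[T.1], rfl, forestCode_singleton _⟩⟩)
    ⟨?_, ?_⟩
  · intro T T' h
    exact Subtype.ext (code_injective (congrArg Subtype.val h))
  · rintro ⟨a, hcount, ha⟩
    obtain ⟨ts, hlen, rfl⟩ := (isLukasiewicz_iff_exists_forestCode m 1 a).1 ha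
    obtain ⟨T, rfl⟩ := List.length_eq_one_iff.1 (by exact_mod_cast hlen)
    rw [forestCode_singleton, count_true_code] at hcount
    exact ⟨⟨T, hcount⟩, by simp [forestCode_singleton]⟩

end Trees

section Ballot

variable (m : ℕ)

def IsBallot (n : ℕ) (b : List Bool) : Prop :=
  b.count true = n ∧ b.count false = m * n ∧
    ∀ j, m * (b.take j).count true ≤ (b.take j).count false

theorem mul_count_take_le_of_forall_true {b : List Bool}
    (h : ∀ p s, b = p ++ true :: s → m * (p.count true + 1) ≤ p.count false) (j : ℕ) :
    m * (b.take j).count true ≤ (b.take j).count false := by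
  induction j with
  | zero => simp
  | succ j ih =>
    rw [List.take_add_one]
    rcases hj : b[j]? with _ | _ | _
    · simpa using ih
    · simpa using ih.trans (Nat.le_succ _)
    · obtain ⟨hjb, hbj⟩ := List.getElem?_eq_some_iff.1 hj
      have := h (b.take j) (b.drop (j + 1))
        (by rw [← hbj, ← List.drop_eq_getElem_cons hjb, List.take_append_drop])
      simpa using this

theorem weight_nonpos_iff (w : List Bool) :
    weight m w ≤ 0 ↔ m * w.count true ≤ w.count false := by
  rw [weight_eq_count, sub_nonpos]
  exact_mod_cast Iff.rfl

theorem isLukasiewicz_reverse_append_false (b : List Bool) :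
    IsLukasiewicz m 1 (b.reverse ++ [false]) ↔
      weight m b = 0 ∧ ∀ j, weight m (b.take j) ≤ 0 := by
  have hprefix (k : ℕ) (hk : k ≤ b.length) :
      weight m ((b.reverse ++ [false]).take k) = weight m b - weight m (b.take (b.length - k)) := by
    rw [List.take_append_of_le_length (by simpa using hk), List.take_reverse, weight_reverse,
      eq_sub_iff_add_eq', ← weight_append, List.take_append_drop]
  simp only [IsLukasiewicz, weight_append, weight_reverse, weight_cons, weight_nil,
    stepWeight_false, List.length_append, List.length_reverse, List.length_singleton,
    Nat.lt_succ_iff]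
  constructor
  · rintro ⟨hsum, hpre⟩
    have hb : weight m b = 0 := by linarith
    refine ⟨hb, fun j => ?_⟩
    rcases le_total j b.length with hj | hj
    · have := hpre (b.length - j) (Nat.sub_le _ _)
      rw [hprefix _ (Nat.sub_le _ _), Nat.sub_sub_self hj] at this
      linarith
    · rw [List.take_of_length_le hj, hb]
  · rintro ⟨hb, hpre⟩
    refine ⟨by linarith, fun k hk => ?_⟩
    rw [hprefix k hk]
    linarith [hpre (b.length - k)]

theorem exists_eq_reverse_append_false {a : List Bool} (ha : IsLukasiewicz m 1 a) :
    ∃ b : List Bool, a = b.reverse ++ [false] := by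
  obtain ⟨hsum, hpre⟩ := ha
  obtain ⟨a', x, rfl⟩ := (List.eq_nil_or_concat' a).resolve_left (by rintro rfl; simp at hsum)
  have := hpre a'.length (by simp)
  rw [List.take_left' rfl] at this
  rw [weight_append] at hsum
  cases x
  · exact ⟨a'.reverse, by simp⟩
  · simp only [weight_cons, stepWeight_true, weight_nil, add_zero] at hsum
    omega

theorem isBallot_iff {n : ℕ} {b : List Bool} : IsBallot m n b ↔
    (b.reverse ++ [false]).count true = n ∧ IsLukasiewicz m 1 (b.reverse ++ [false]) := by
  rw [isLukasiewicz_reverse_append_false]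
  simp only [IsBallot, List.count_append, List.count_reverse, List.count_singleton,
    ← weight_nonpos_iff, weight_eq_count m b, sub_eq_zero]
  constructor
  · rintro ⟨htrue, hfalse, hpre⟩
    exact ⟨by simpa using htrue, by rw [htrue, hfalse]; push_cast; ring, hpre⟩
  · rintro ⟨htrue, hfalse, hpre⟩
    simp only [beq_true, Bool.false_eq_true, ↓reduceIte, add_zero] at htrue
    exact ⟨htrue, by rw [htrue] at hfalse; exact_mod_cast hfalse.symm, hpre⟩

theorem card_isBallot_eq_card_isLukasiewicz (n : ℕ) :
    Nat.card {b : List Bool // IsBallot m n b} =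
      Nat.card {a : List Bool // a.count true = n ∧ IsLukasiewicz m 1 a} := by
  refine Nat.card_eq_of_bijective (fun b => ⟨b.1.reverse ++ [false], (isBallot_iff m).1 b.2⟩)
    ⟨fun b b' h => ?_, fun a => ?_⟩
  · have := List.append_inj_left' (congrArg Subtype.val h) rfl
    exact Subtype.ext (List.reverse_injective this)
  · obtain ⟨b, hb⟩ := exists_eq_reverse_append_false m a.2.2
    exact ⟨⟨b, (isBallot_iff m).2 (hb ▸ a.2)⟩, Subtype.ext hb.symm⟩

end Ballot

section Paths

def mask (w : List Step) : List Bool := w.map (decide <| · = .D)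

def eraseD (w : List Step) : List Step := w.filter (· ≠ .D)

def merge : List Bool → List Step → List Step
  | [], _ => []
  | true :: b, σ => .D :: merge b σ
  | false :: _, [] => []
  | false :: b, x :: σ => x :: merge b σ

@[simp] theorem length_mask (w : List Step) : (mask w).length = w.length := List.length_map _

theorem merge_mask_eraseD (w : List Step) : merge (mask w) (eraseD w) = w := by
  induction w with
  | nil => rfl
  | cons x w ih => cases x <;> simp_all [mask, eraseD, merge]

theorem mask_merge_and_eraseD_merge : ∀ {b : List Bool} {σ : List Step},
    b.count false = σ.length → .D ∉ σ → mask (merge b σ) = b ∧ eraseD (merge b σ) = σ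
  | [], [], _, _ => ⟨rfl, rfl⟩
  | true :: b, σ, hlen, hσ => by
    simpa [merge, mask, eraseD] using mask_merge_and_eraseD_merge (b := b) (by simpa using hlen) hσ
  | false :: b, x :: σ, hlen, hσ => by
    have hx : x ≠ .D := by rintro rfl; simp at hσ
    simpa [merge, mask, eraseD, hx] using
      mask_merge_and_eraseD_merge (b := b) (by simpa using hlen) (by simp_all)
  | [], _ :: _, hlen, _ => by simp at hlen
  | false :: _, [], hlen, _ => by simp at hlen

@[simp] theorem count_true_mask (w : List Step) : (mask w).count true = w.count .D := by
  induction w with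
  | nil => rfl
  | cons x w ih => cases x <;> simp_all [mask]

@[simp] theorem count_false_mask (w : List Step) :
    (mask w).count false = w.count .H + w.count .U := by
  induction w with
  | nil => rfl
  | cons x w ih => cases x <;> simp_all [mask] <;> omega

@[simp] theorem count_H_eraseD (w : List Step) : (eraseD w).count .H = w.count .H :=
  List.count_filter (by decide)

@[simp] theorem count_U_eraseD (w : List Step) : (eraseD w).count .U = w.count .U :=
  List.count_filter (by decide)

theorem D_not_mem_eraseD (w : List Step) : .D ∉ eraseD w := by
  simp [eraseD]

theorem count_H_add_count_U {σ : List Step} (hσ : .D ∉ σ) :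
    σ.count .H + σ.count .U = σ.length := by
  induction σ with
  | nil => rfl
  | cons x σ ih => cases x <;> simp_all <;> omega

theorem length_eraseD (w : List Step) : (eraseD w).length = (mask w).count false := by
  rw [← count_H_add_count_U (D_not_mem_eraseD w), count_H_eraseD, count_U_eraseD,
    count_false_mask]

end Paths

section Skeleton

variable (e : ℕ)

def skel : ℕ → List Step
  | 0 => []
  | n + 1 => List.replicate e .H ++ .U :: skel n

def HasGaps (w : List Step) : Prop :=
  ∀ p mid s : List Step, w = p ++ .U :: mid ++ .U :: s → .U ∉ mid → mid.count .H = e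

variable {e}

@[simp] theorem count_U_skel (n : ℕ) : (skel e n).count .U = n := by
  induction n with
  | zero => rfl
  | succ n ih => simp [skel, ih, List.count_replicate]

@[simp] theorem count_H_skel (n : ℕ) : (skel e n).count .H = e * n := by
  induction n with
  | zero => rfl
  | succ n ih => simp [skel, ih]; ring

theorem D_not_mem_skel (n : ℕ) : .D ∉ skel e n := by
  induction n with
  | zero => simp [skel]
  | succ n ih => simp [skel, ih, List.mem_replicate]

theorem length_skel (n : ℕ) : (skel e n).length = (e + 1) * n := by
  rw [← count_H_add_count_U (D_not_mem_skel n), count_H_skel, count_U_skel]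
  ring

theorem count_U_take_skel {n k : ℕ} (hk : k ≤ (e + 1) * n) :
    ((skel e n).take k).count .U = k / (e + 1) := by
  induction n generalizing k with
  | zero => simp_all
  | succ n ih =>
    rw [skel, List.take_append, List.length_replicate, List.count_append, List.take_replicate,
      List.count_replicate]
    rcases le_or_gt k e with hke | hke
    · simp [Nat.sub_eq_zero_of_le hke, Nat.div_eq_of_lt (Nat.lt_succ_of_le hke)]
    · obtain ⟨j, rfl⟩ : ∃ j, k = j + (e + 1) := ⟨k - (e + 1), by omega⟩
      rw [show j + (e + 1) - e = j + 1 by omega, List.take_succ_cons, List.count_cons_self,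
        ih (by rw [mul_add] at hk; omega), Nat.add_div_right _ e.succ_pos]
      simp

theorem count_U_of_prefix_skel {n : ℕ} {τ : List Step} (hτ : τ <+: skel e n) :
    τ.count .U = τ.length / (e + 1) := by
  have hlen := hτ.length_le
  rw [length_skel] at hlen
  conv_lhs => rw [List.prefix_iff_eq_take.1 hτ]
  exact count_U_take_skel hlen

theorem eq_replicate_H {σ : List Step} (hU : .U ∉ σ) (hD : .D ∉ σ) :
    σ = List.replicate (σ.count .H) .H := by
  have hσ : ∀ x ∈ σ, x = .H := by
    intro x hx
    cases x <;> simp_all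
  rw [List.count_eq_length.2 fun x hx => (hσ x hx).symm]
  exact List.eq_replicate_iff.2 ⟨rfl, hσ⟩

/-- The `U`s of `skel e n` sit exactly at the positions `≡ -1 (mod e + 1)`, so two consecutive
ones are `e + 1` apart. -/
theorem hasGaps_skel (n : ℕ) : HasGaps e (skel e n) := by
  intro p mid s hw hmid
  have hcount {τ : List Step} (hτ : τ <+: p ++ .U :: mid ++ .U :: s) :=
    count_U_of_prefix_skel (hw ▸ hτ)
  have h₁ := hcount (τ := p) (by simp)
  have h₂ := hcount (τ := p ++ [.U]) (by simp)
  have h₃ := hcount (τ := p ++ .U :: mid) ⟨.U :: s, by simp⟩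
  have h₄ := hcount (τ := p ++ .U :: mid ++ [.U]) ⟨s, by simp⟩
  simp only [List.count_append, List.count_cons_self, List.count_eq_zero.2 hmid,
    List.length_append, List.length_cons] at h₁ h₂ h₃ h₄
  have hstep {x c : ℕ} (hx : x / (e + 1) = c) (hx' : (x + 1) / (e + 1) = c + 1) :
      x + 1 = (e + 1) * (c + 1) := by
    rw [Nat.succ_div, hx] at hx'
    have hdvd : e + 1 ∣ x + 1 := by by_contra h; simp [h] at hx'
    rw [← Nat.mul_div_cancel' hdvd, Nat.succ_div, hx, if_pos hdvd]
  have hmidD : .D ∉ mid := fun h => D_not_mem_skel n (by rw [hw]; simp [h])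
  have hp := hstep h₁.symm (by simpa using h₂.symm)
  have hpmid := hstep (x := p.length + (mid.length + 1)) (by simpa using h₃.symm)
    (by simpa [add_assoc] using h₄.symm)
  have := count_H_add_count_U hmidD
  rw [List.count_eq_zero.2 hmid] at this
  nlinarith

theorem HasGaps.of_append {v w : List Step} (h : HasGaps e (v ++ w)) : HasGaps e w :=
  fun p mid s hw hmid => h (v ++ p) mid s (by simp [hw]) hmid

theorem exists_eq_skel_append_replicate {τ : List Step} (hD : .D ∉ τ)
    (hgap : HasGaps e (.U :: τ)) : ∃ r, τ = skel e (τ.count .U) ++ List.replicate r .H := by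
  induction hn : τ.count .U generalizing τ with
  | zero =>
    exact ⟨τ.count .H, by simpa [skel] using eq_replicate_H (List.count_eq_zero.1 hn) hD⟩
  | succ n ih =>
    obtain ⟨mid, s, rfl, hmid⟩ :=
      List.eq_append_cons_of_mem (List.count_pos_iff.1 (by omega : 0 < τ.count .U))
    have hmidH := hgap [] mid s (by simp) hmid
    obtain ⟨r, hs⟩ := ih (by simp_all) (hgap.of_append (v := .U :: mid))
      (by simpa [List.count_eq_zero.2 hmid] using hn)
    refine ⟨r, ?_⟩
    rw [eq_replicate_H hmid (by simp_all), hmidH, hs]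
    simp [skel]

theorem eq_skel {n : ℕ} {σ : List Step} (hD : .D ∉ σ) (hgap : HasGaps e σ)
    (hstart : σ ≠ [] → List.replicate e .H <+: σ) (hU : σ.count .U = n)
    (hH : σ.count .H = e * n) : σ = skel e n := by
  cases n with
  | zero =>
    have := count_H_add_count_U hD
    rw [hU, hH, mul_zero] at this
    exact List.length_eq_zero_iff.1 this.symm
  | succ n =>
    obtain ⟨ρ, rfl⟩ := hstart (by rintro rfl; simp at hU)
    have hρU : ρ.count .U = n + 1 := by simpa [List.count_replicate] using hU
    obtain ⟨mid, τ, rfl, hmid⟩ :=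
      List.eq_append_cons_of_mem (List.count_pos_iff.1 (by omega : 0 < ρ.count .U))
    have hτU : τ.count .U = n := by simpa [List.count_eq_zero.2 hmid] using hρU
    obtain ⟨r, hτ⟩ := exists_eq_skel_append_replicate (τ := τ) (by simp_all)
      (HasGaps.of_append (v := List.replicate e .H ++ mid) (by simpa using hgap))
    rw [hτU] at hτ
    rw [eq_replicate_H hmid (by simp_all)] at hH ⊢
    subst hτ
    -- the leading `H^e` and the `n` later gaps already use up all `e (n + 1)` letters `H`
    have hcount : e + (mid.count .H + (e * n + r)) = e * (n + 1) := by simpa using hH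
    obtain ⟨hmid0, rfl⟩ : mid.count .H = 0 ∧ r = 0 := by constructor <;> nlinarith
    simp [skel, hmid0]

theorem hasGaps_eraseD {w : List Step} (h : HasGaps e w) : HasGaps e (eraseD w) := by
  intro p mid s hw hmid
  obtain ⟨w₁, w₂, rfl, hw₁, hw₂⟩ := List.filter_eq_append_iff.1 hw
  obtain ⟨w₃, w₄, rfl, rfl, hw₄⟩ := List.filter_eq_append_iff.1 hw₁
  obtain ⟨x, w₅, rfl, hx, -, rfl⟩ := List.filter_eq_cons_iff.1 hw₄
  obtain ⟨y, w₆, rfl, hy, -, rfl⟩ := List.filter_eq_cons_iff.1 hw₂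
  simp only [decide_not, Bool.not_eq_true', decide_eq_false_iff_not, not_not] at hx hy
  have hyD : y.count .H = 0 := List.count_eq_zero.2 fun hH => by simpa using hy _ hH
  have := h (w₃ ++ x) (w₅ ++ y) w₆ (by simp) (by
    simp only [List.mem_append, not_or]
    exact ⟨fun hU => hmid (List.mem_filter.2 ⟨hU, by simp⟩),
      fun hU => by simpa using hy _ hU⟩)
  rwa [List.count_append, hyD, add_zero, ← count_H_eraseD] at this

end Skeleton

section GenSMotzkin

variable {e n : ℕ} {w : List Step}

theorem mask_prefix_eq_take {p : List Step} (hp : p <+: w) : mask p = (mask w).take p.length := by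
  conv_lhs => rw [List.prefix_iff_eq_take.1 hp]
  simp [mask, List.map_take]

theorem count_U_of_prefix (hw : eraseD w = skel e n) {p : List Step} (hp : p <+: w) :
    p.count .U = (mask p).count false / (e + 1) := by
  rw [← count_U_eraseD, ← length_eraseD]
  exact count_U_of_prefix_skel (by rw [← hw]; exact hp.filter _)

theorem eraseD_eq_skel_of_genSMotzkin (h : GenSMotzkin (e + 2) n w) : eraseD w = skel e n := by
  obtain ⟨hH, hU, -, -, hstart, hgap, -⟩ := h
  simp only [Nat.add_sub_cancel] at hH hstart hgap
  refine eq_skel (D_not_mem_eraseD w) (hasGaps_eraseD hgap) (fun hne => ?_)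
    (by rw [count_U_eraseD, hU]) (by rw [count_H_eraseD, hH])
  have hw := hstart (by rintro rfl; simp [eraseD] at hne)
  rw [← List.take_append_drop e w, hw]
  exact ⟨eraseD (w.drop e), by simp [eraseD]⟩

theorem isBallot_mask_of_genSMotzkin (h : GenSMotzkin (e + 2) n w) :
    IsBallot (e + 1) n (mask w) := by
  obtain ⟨hH, hU, hD, -, -, -, hDpos⟩ := h
  simp only [Nat.add_sub_cancel] at hH hDpos
  refine ⟨by simp [hD], by simp [hH, hU]; ring, mul_count_take_le_of_forall_true _ ?_⟩
  intro p' s' hw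
  obtain ⟨p, w', rfl, rfl, hw'⟩ := List.map_eq_append_iff.1 hw
  obtain ⟨x, s, rfl, hx, -⟩ := List.map_eq_cons_iff.1 hw'
  obtain rfl : x = .D := by simpa using hx
  have := hDpos p s rfl
  have hmask : p.map (decide <| · = .D) = mask p := rfl
  rw [hmask, count_true_mask, count_false_mask]
  nlinarith

theorem mul_count_D_le_of_prefix (hb : IsBallot (e + 1) n (mask w)) {p : List Step}
    (hp : p <+: w) : (e + 1) * p.count .D ≤ p.count .H + p.count .U := by
  have := hb.2.2 p.length
  rwa [← mask_prefix_eq_take hp, count_true_mask, count_false_mask] at this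

theorem take_eq_replicate_of_isBallot (hw : eraseD w = skel e n)
    (hb : IsBallot (e + 1) n (mask w)) (hne : w ≠ []) : w.take e = List.replicate e .H := by
  have hlen : w.length = (e + 2) * n := by
    rw [← length_mask, ← (mask w).count_true_add_count_false, hb.1, hb.2.1]
    ring
  have hpe : (w.take e).length = e := by
    have : n ≠ 0 := by rintro rfl; simp_all
    rw [List.length_take, hlen]
    exact min_eq_left (by nlinarith [Nat.one_le_iff_ne_zero.2 this])
  have hHU := count_H_add_count_U (σ := w.take e)
  have hp : w.take e <+: w := List.take_prefix e w
  have hDUH : (w.take e).count .H + (w.take e).count .U ≤ e := by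
    rw [← count_false_mask]
    exact List.count_le_length.trans (by rw [length_mask, hpe])
  have hD : (w.take e).count .D = 0 := by nlinarith [mul_count_D_le_of_prefix hb hp]
  have hU : (w.take e).count .U = 0 := by
    rw [count_U_of_prefix hw hp, count_false_mask, Nat.div_eq_of_lt (by omega)]
  rw [eq_replicate_H (List.count_eq_zero.1 hU) (List.count_eq_zero.1 hD)]
  rw [hU, hpe, add_zero] at hHU
  rw [hHU (List.count_eq_zero.1 hD)]

theorem count_le_of_eq_append_D (hw : eraseD w = skel e n) (hb : IsBallot (e + 1) n (mask w))
    {p s : List Step} (hws : w = p ++ .D :: s) :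
    (p.count .D + 1) * e ≤ p.count .H ∧ p.count .D + 1 ≤ p.count .U := by
  have hp : (e + 1) * (p.count .D + 1) ≤ p.count .H + p.count .U := by
    have := mul_count_D_le_of_prefix hb (p := p ++ [.D]) ⟨s, by simp [hws]⟩
    simpa [List.count_append] using this
  have hU := count_U_of_prefix hw (p := p) ⟨.D :: s, hws.symm⟩
  rw [count_false_mask] at hU
  have hDU : p.count .D + 1 ≤ p.count .U := by
    rw [hU, Nat.le_div_iff_mul_le e.succ_pos]
    linarith
  have hUH : p.count .U * (e + 1) ≤ p.count .H + p.count .U := by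
    conv_lhs => rw [hU]
    exact Nat.div_mul_le_self _ _
  exact ⟨by nlinarith, hDU⟩

theorem genSMotzkin_of_eraseD_eq_skel (hw : eraseD w = skel e n)
    (hb : IsBallot (e + 1) n (mask w)) : GenSMotzkin (e + 2) n w := by
  simp only [GenSMotzkin, Nat.add_sub_cancel]
  refine ⟨by rw [← count_H_eraseD, hw, count_H_skel],
    by rw [← count_U_eraseD, hw, count_U_skel],
    by rw [← count_true_mask]; exact hb.1, fun p hp => ?_, take_eq_replicate_of_isBallot hw hb,
    fun p mid s hws hmid => ?_, fun p s => count_le_of_eq_append_D hw hb⟩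
  · rw [count_U_of_prefix hw hp, Nat.le_div_iff_mul_le e.succ_pos, mul_comm, count_false_mask]
    exact mul_count_D_le_of_prefix hb hp
  · rw [← count_H_eraseD]
    refine hasGaps_skel n (eraseD p) (eraseD mid) (eraseD s) ?_ (by simpa [eraseD] using hmid)
    rw [← hw, hws]
    simp [eraseD]

theorem card_genSMotzkin_eq_card_isBallot (e n : ℕ) :
    Nat.card {w : List Step // GenSMotzkin (e + 2) n w} =
      Nat.card {b : List Bool // IsBallot (e + 1) n b} := by
  refine Nat.card_eq_of_bijective (fun w => ⟨mask w, isBallot_mask_of_genSMotzkin w.2⟩)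
    ⟨fun w w' h => Subtype.ext ?_, fun b => ?_⟩
  · have hmask : mask w.1 = mask w'.1 := congrArg Subtype.val h
    rw [← merge_mask_eraseD w.1, ← merge_mask_eraseD w'.1, eraseD_eq_skel_of_genSMotzkin w.2,
      eraseD_eq_skel_of_genSMotzkin w'.2, hmask]
  · obtain ⟨hmask, herase⟩ := mask_merge_and_eraseD_merge (b := b.1) (σ := skel e n)
      (by rw [b.2.2.1, length_skel]) (D_not_mem_skel n)
    exact ⟨⟨merge b.1 (skel e n),
      genSMotzkin_of_eraseD_eq_skel herase (by rw [hmask]; exact b.2)⟩, Subtype.ext hmask⟩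

end GenSMotzkin

end SMotzkin

theorem gen_smotzkin_count (t n : ℕ) (ht : 2 ≤ t) :
    Nat.card {w : List Step // GenSMotzkin t n w} =
        (t * n).choose n / ((t - 1) * n + 1) ∧
      Nat.card {w : List Step // GenSMotzkin t n w} =
        Nat.card {T : TAry t // T.size = n} := by
  obtain ⟨e, rfl⟩ : ∃ e, t = e + 2 := ⟨t - 2, by omega⟩
  have hcard : Nat.card {w : List Step // GenSMotzkin (e + 2) n w} =
      Nat.card {a : List Bool // a.count true = n ∧ SMotzkin.IsLukasiewicz (e + 1) 1 a} := by
    rw [SMotzkin.card_genSMotzkin_eq_card_isBallot, SMotzkin.card_isBallot_eq_card_isLukasiewicz]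
  refine ⟨?_, hcard.trans (SMotzkin.card_tree_eq_card_isLukasiewicz (e + 1) n).symm⟩
  rw [hcard, ← SMotzkin.card_isLukasiewicz_mul, show e + 2 - 1 = e + 1 by omega]
  exact (Nat.mul_div_cancel _ (Nat.succ_pos _)).symm
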